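/- arXiv:1502.07165 — 9 statements merged into one kernel-verified Lean document; each statement's English description precedes it below -/
import Mathlib

section
/- For every n ≥ 0 and every smooth function y : ℝ → ℝ, the n-th iterate of the operator Ψ admits the expansion Ψⁿ[y](x) = Σ_{j=0}^{n} Kₙʲ(x) · y^{(n−j)}(x) for all x ∈ ℝ, where the coefficient functions Kₙʲ are defined by the recurrence Kₙʲ = r·K_{n−1}ʲ + Ψ[K_{n−1}^{j−1}]. -/
open scoped ContDiff


noncomputable def Psi (r s : ℝ → ℝ) (y : ℝ → ℝ) : ℝ → ℝ :=
  fun x => r x * deriv y x + s x * y x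

noncomputable def PsiIter (r s : ℝ → ℝ) : ℕ → (ℝ → ℝ) → (ℝ → ℝ)
  | 0, y => y
  | n + 1, y => PsiIter r s n (Psi r s y)

noncomputable def Kcoef (r s : ℝ → ℝ) : ℕ → ℤ → (ℝ → ℝ)
  | 0, j => if j = 0 then 1 else 0
  | n + 1, j =>
      if j < 0 ∨ (n + 1 : ℤ) < j then 0
      else fun x => r x * Kcoef r s n j x + Psi r s (Kcoef r s n (j - 1)) x

lemma psi_contDiff {r s y : ℝ → ℝ} (hr : ContDiff ℝ ∞ r) (hs : ContDiff ℝ ∞ s)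
    (hy : ContDiff ℝ ∞ y) : ContDiff ℝ ∞ (Psi r s y) := by
  have hy' : ContDiff ℝ ∞ (deriv y) := (contDiff_infty_iff_deriv.mp hy).2
  exact (hr.mul hy').add (hs.mul hy)

lemma kcoef_contDiff {r s : ℝ → ℝ} (hr : ContDiff ℝ ∞ r) (hs : ContDiff ℝ ∞ s) :
    ∀ n (j : ℤ), ContDiff ℝ ∞ (Kcoef r s n j) := by
  intro n
  induction n with
  | zero =>
    intro j
    by_cases h : j = 0 <;> simp [Kcoef, h] <;> exact contDiff_const
  | succ n ih =>
    intro j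
    by_cases h : j < 0 ∨ (n + 1 : ℤ) < j
    · simp only [Kcoef, if_pos h]; exact contDiff_const
    · simp only [Kcoef, if_neg h]
      exact (hr.mul (ih j)).add (psi_contDiff hr hs (ih (j - 1)))

lemma kcoef_eq_zero {r s : ℝ → ℝ} {n : ℕ} {j : ℤ} (h : j < 0 ∨ (n : ℤ) < j) :
    Kcoef r s n j = 0 := by
  cases n with
  | zero =>
    have hj : j ≠ 0 := by omega
    simp [Kcoef, hj]
  | succ n =>
    have h' : j < 0 ∨ (n + 1 : ℤ) < j := by push_cast at h; omega
    simp [Kcoef, h']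

lemma psiIter_succ (r s : ℝ → ℝ) : ∀ (n : ℕ) (y : ℝ → ℝ),
    PsiIter r s (n + 1) y = Psi r s (PsiIter r s n y) := by
  intro n
  induction n with
  | zero => intro y; rfl
  | succ n ih =>
    intro y
    show PsiIter r s (n + 1) (Psi r s y) = _
    rw [ih]
    rfl

/-- For every n ≥ 0 and smooth y, Ψⁿ[y](x) = ∑_{j=0}^{n} Kₙʲ(x)·y^{(n−j)}(x). -/
theorem psi_iter_expansion (r s y : ℝ → ℝ)
    (hr : ContDiff ℝ (⊤ : ℕ∞) r) (hs : ContDiff ℝ (⊤ : ℕ∞) s) (hy : ContDiff ℝ (⊤ : ℕ∞) y)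
    (n : ℕ) (x : ℝ) :
    PsiIter r s n y x =
      ∑ j ∈ Finset.range (n + 1), Kcoef r s n (j : ℤ) x * iteratedDeriv (n - j) y x := by
  have hr' : ContDiff ℝ ∞ r := hr.of_le (by simp)
  have hs' : ContDiff ℝ ∞ s := hs.of_le (by simp)
  have hy' : ContDiff ℝ ∞ y := hy.of_le (by simp)
  have hK := kcoef_contDiff hr' hs'
  have hyk : ∀ k : ℕ, ContDiff ℝ ∞ (iteratedDeriv k y) := by
    intro k
    rw [iteratedDeriv_eq_iterate]
    exact hy'.iterate_deriv k
  induction n generalizing x with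
  | zero => simp [PsiIter, Kcoef]
  | succ n ih =>
    have hle : (1 : WithTop ℕ∞) ≤ ∞ := by exact_mod_cast (le_top : (1 : ℕ∞) ≤ ⊤)
    have hF : PsiIter r s n y =
        fun z => ∑ j ∈ Finset.range (n + 1),
          Kcoef r s n (j : ℤ) z * iteratedDeriv (n - j) y z := funext ih
    have hder : HasDerivAt (PsiIter r s n y)
        (∑ j ∈ Finset.range (n + 1),
          (deriv (Kcoef r s n (j : ℤ)) x * iteratedDeriv (n - j) y x
            + Kcoef r s n (j : ℤ) x * iteratedDeriv (n - j + 1) y x)) x := by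
      rw [hF]
      apply HasDerivAt.fun_sum
      intro j _
      have h1 : HasDerivAt (Kcoef r s n (j : ℤ)) (deriv (Kcoef r s n (j : ℤ)) x) x :=
        ((hK n j).differentiable (by simp) x).hasDerivAt
      have h2 : HasDerivAt (iteratedDeriv (n - j) y) (iteratedDeriv (n - j + 1) y x) x := by
        have h3 := ((hyk (n - j)).differentiable (by simp) x).hasDerivAt
        rw [show iteratedDeriv (n - j + 1) y = deriv (iteratedDeriv (n - j) y) from
          iteratedDeriv_succ]
        exact h3
      exact h1.mul h2
    rw [psiIter_succ]
    show r x * deriv (PsiIter r s n y) x + s x * PsiIter r s n y x = _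
    rw [hder.deriv, ih x]
    have hKsucc : ∀ j ∈ Finset.range (n + 2),
        Kcoef r s (n + 1) (j : ℤ) x * iteratedDeriv (n + 1 - j) y x
          = r x * Kcoef r s n (j : ℤ) x * iteratedDeriv (n + 1 - j) y x
            + (r x * deriv (Kcoef r s n ((j : ℤ) - 1)) x
                + s x * Kcoef r s n ((j : ℤ) - 1) x) * iteratedDeriv (n + 1 - j) y x := by
      intro j hj
      rw [Finset.mem_range] at hj
      have hc : ¬ ((j : ℤ) < 0 ∨ (n + 1 : ℤ) < (j : ℤ)) := by omega
      simp only [Kcoef, if_neg hc, Psi]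
      ring
    have hfst : ∑ j ∈ Finset.range (n + 2),
        r x * Kcoef r s n (j : ℤ) x * iteratedDeriv (n + 1 - j) y x
        = ∑ j ∈ Finset.range (n + 1),
            r x * Kcoef r s n (j : ℤ) x * iteratedDeriv (n + 1 - j) y x := by
      rw [Finset.sum_range_succ]
      have hz : Kcoef r s n (((n + 1 : ℕ) : ℤ)) = 0 :=
        @kcoef_eq_zero r s n (((n + 1 : ℕ) : ℤ)) (by omega)
      rw [hz]
      simp
    have hsnd : ∑ j ∈ Finset.range (n + 2),
        (r x * deriv (Kcoef r s n ((j : ℤ) - 1)) x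
          + s x * Kcoef r s n ((j : ℤ) - 1) x) * iteratedDeriv (n + 1 - j) y x
        = ∑ j ∈ Finset.range (n + 1),
            (r x * deriv (Kcoef r s n (j : ℤ)) x
              + s x * Kcoef r s n (j : ℤ) x) * iteratedDeriv (n - j) y x := by
      rw [Finset.sum_range_succ']
      have h0 : Kcoef r s n (((0 : ℕ) : ℤ) - 1) = 0 :=
        @kcoef_eq_zero r s n (((0 : ℕ) : ℤ) - 1) (by omega)
      rw [h0]
      have hz : deriv (0 : ℝ → ℝ) x = 0 := by
        rw [show (0 : ℝ → ℝ) = fun _ => (0 : ℝ) from rfl]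
        simp
      rw [hz]
      simp only [Pi.zero_apply, mul_zero, zero_mul, add_zero, zero_add]
      apply Finset.sum_congr rfl
      intro j _
      have hcast : ((j + 1 : ℕ) : ℤ) - 1 = (j : ℤ) := by push_cast; ring
      have hsub : n + 1 - (j + 1) = n - j := by omega
      rw [hcast, hsub]
    conv_rhs => rw [Finset.sum_congr rfl hKsucc, Finset.sum_add_distrib, hfst, hsnd,
      ← Finset.sum_add_distrib]
    rw [Finset.mul_sum, Finset.mul_sum, ← Finset.sum_add_distrib]
    apply Finset.sum_congr rfl
    intro j hj
    rw [Finset.mem_range] at hj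
    have hsub : n + 1 - j = n - j + 1 := by omega
    rw [hsub]
    ring
end

section
/- For all n ≥ 1, the coefficient of y^{(n−1)} in the expansion of Ψⁿ[y] is given in closed form by Kₙ¹ = r^{n−1} · ( n·s + (n choose 2)·r' ) (as functions on ℝ). -/
lemma Kneg (r s : ℝ → ℝ) (n : ℕ) : Kcoef r s n (-1) = 0 := by
  cases n <;> simp [Kcoef]

lemma Kzero (r s : ℝ → ℝ) (n : ℕ) : Kcoef r s n 0 = fun x => r x ^ n := by
  induction n with
  | zero => funext x; simp [Kcoef]
  | succ n ih =>
    funext x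
    show Kcoef r s (n+1) 0 x = _
    simp only [Kcoef, show ¬((0:ℤ) < 0 ∨ (n + 1 : ℤ) < 0) by omega, if_neg,
      show (0:ℤ) - 1 = -1 from rfl, Kneg, ih, Psi]
    simp [pow_succ, mul_comm, Pi.zero_def]

lemma Kstep (r s : ℝ → ℝ) (n : ℕ) (x : ℝ) :
    Kcoef r s (n + 1) 1 x =
      r x * Kcoef r s n 1 x + r x * deriv (Kcoef r s n 0) x + s x * Kcoef r s n 0 x := by
  rw [Kcoef, if_neg (by omega)]
  simp only [Psi, show (1:ℤ) - 1 = 0 from rfl]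
  ring

/-- For all n ≥ 1, Kₙ¹ = r^{n−1}·(n·s + C(n,2)·r'). -/
theorem K_n_1_closed_form (r s : ℝ → ℝ)
    (hr : ContDiff ℝ (⊤ : ℕ∞) r) (hs : ContDiff ℝ (⊤ : ℕ∞) s)
    (n : ℕ) (hn : 1 ≤ n) (x : ℝ) :
    Kcoef r s n 1 x =
      r x ^ (n - 1) * ((n : ℝ) * s x + (n.choose 2 : ℝ) * deriv r x) := by
  induction n, hn using Nat.le_induction generalizing x with
  | base =>
    rw [Kstep, Kzero]
    have h1 : Kcoef r s 0 1 x = 0 := by simp [Kcoef]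
    simp [h1]
  | succ n hn ih =>
    obtain ⟨m, rfl⟩ : ∃ m, n = m + 1 := ⟨n - 1, by omega⟩
    rw [Kstep, Kzero, ih]
    have hd : deriv (fun x => r x ^ (m + 1)) x
        = (m + 1 : ℝ) * r x ^ m * deriv r x := by
      rw [deriv_fun_pow (hr.differentiable (by simp) x)]
      norm_num
    rw [hd]
    have hc : ((m + 1 + 1).choose 2 : ℝ) = ((m + 1).choose 2 : ℝ) + (m + 1 : ℝ) := by
      rw [Nat.choose_succ_succ (m + 1) 1]
      push_cast [Nat.choose_one_right]
      ring
    simp only [Nat.add_sub_cancel, hc]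
    push_cast
    ring
end

section
/- Let n ≥ 2, let r : ℝ → ℝ be smooth and nonvanishing, and set s = −((n−1)/2)·r'. Then the coefficient Kₙ² satisfies Kₙ² = rⁿ · (n+1 choose 3) · 𝒜(r) on ℝ; that is, the coefficient of the term of third highest order of the iterative equation in normal form is Aₙ² = (n+1 choose 3)·𝒜(r). -/
noncomputable def calA (ξ : ℝ → ℝ) : ℝ → ℝ :=
  fun x => ((deriv ξ x) ^ 2 - 2 * ξ x * deriv (deriv ξ) x) / (4 * (ξ x) ^ 2)

lemma Kcoef_neg (r s : ℝ → ℝ) (m : ℕ) (j : ℤ) (hj : j < 0) :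
    Kcoef r s m j = fun _ => 0 := by
  cases m with
  | zero =>
      funext x
      simp [Kcoef, show j ≠ 0 by omega]
  | succ k =>
      funext x
      simp [Kcoef, Or.inl hj]

lemma Psi_zero (r s : ℝ → ℝ) (x : ℝ) : Psi r s (fun _ => 0) x = 0 := by
  simp [Psi]

lemma Kcoef_zero (r s : ℝ → ℝ) : ∀ m : ℕ, Kcoef r s m 0 = fun x => r x ^ m := by
  intro m
  induction m with
  | zero => funext x; simp [Kcoef]
  | succ k ih =>
      funext x
      show Kcoef r s (k+1) 0 x = r x ^ (k+1)
      rw [Kcoef]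
      rw [if_neg (by omega)]
      rw [show (0 - 1 : ℤ) = -1 by norm_num, Kcoef_neg r s k (-1) (by norm_num),
        Psi_zero, ih]
      ring

lemma Kcoef_one (r s : ℝ → ℝ) (hd : Differentiable ℝ r) (ν : ℝ)
    (hs : ∀ x : ℝ, s x = -((ν - 1) / 2) * deriv r x) :
    ∀ m : ℕ, Kcoef r s (m+1) 1 =
      fun x => ((m:ℝ)+1) * (((m:ℝ)+1) - ν) / 2 * (r x ^ m * deriv r x) := by
  intro m
  induction m with
  | zero =>
      funext x
      show Kcoef r s 1 1 x = _
      rw [Kcoef]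
      rw [if_neg (by omega)]
      rw [show (1 - 1 : ℤ) = 0 by norm_num]
      simp [Kcoef, Psi, hs x, Pi.one_def]
      ring
  | succ k ih =>
      funext x
      show Kcoef r s (k+2) 1 x = _
      rw [Kcoef]
      rw [if_neg (by omega)]
      rw [show ((1:ℤ) - 1) = 0 by norm_num, ih, Kcoef_zero]
      have hpow : HasDerivAt (fun y => r y ^ (k+1))
          ((((k:ℝ))+1) * r x ^ k * deriv r x) x := by
        have := ((hd x).hasDerivAt).pow (k+1)
        simp only [Nat.cast_add, Nat.cast_one, Nat.add_sub_cancel] at this; exact this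
      rw [Psi, hpow.deriv, hs x]
      push_cast
      ring

lemma Kcoef_two (r s : ℝ → ℝ) (hd : Differentiable ℝ r)
    (hd' : Differentiable ℝ (deriv r)) (ν : ℝ)
    (hs : ∀ x : ℝ, s x = -((ν - 1) / 2) * deriv r x) :
    ∀ m : ℕ, ∀ x : ℝ, Kcoef r s (m+2) 2 x =
      r x ^ m *
        ((((m:ℝ)+2) * (((m:ℝ)+2) - 1) *
            (3 * (((m:ℝ)+2) - 1) * (((m:ℝ)+2)) - (3*ν+1) * (2*((m:ℝ)+2) - 1)
              + 3*ν*(ν+1)) / 24) * deriv r x ^ 2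
          + ((((m:ℝ)+2) * (((m:ℝ)+2) - 1) * (2*((m:ℝ)+2) - 1 - 3*ν) / 12))
              * (r x * deriv (deriv r) x)) := by
  intro m
  induction m with
  | zero =>
      intro x
      show Kcoef r s 2 2 x = _
      rw [Kcoef]
      rw [if_neg (by omega)]
      rw [show ((2:ℤ) - 1) = 1 by norm_num]
      have h12 : Kcoef r s 1 2 = fun _ => 0 := by
        funext y; simp [Kcoef]
      have h11 := Kcoef_one r s hd ν hs 0
      rw [h12, h11, Psi]
      simp only [Nat.cast_zero] at *
      have hder : deriv (fun x => ((0:ℝ)+1) * (((0:ℝ)+1) - ν) / 2 * (r x ^ 0 * deriv r x)) x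
          = ((0:ℝ)+1) * (((0:ℝ)+1) - ν) / 2 * deriv (deriv r) x := by
        simp only [pow_zero, one_mul]
        rw [deriv_const_mul _ (hd' x)]
      rw [hder, hs x]
      ring
  | succ k ih =>
      intro x
      show Kcoef r s (k+3) 2 x = _
      rw [Kcoef]
      rw [if_neg (by omega)]
      rw [show ((2:ℤ) - 1) = 1 by norm_num]
      have h1 := Kcoef_one r s hd ν hs (k+1)
      rw [ih x, h1, Psi]
      push_cast
      have hder : HasDerivAt
          (fun y => ((k:ℝ)+1+1) * ((k:ℝ)+1+1 - ν) / 2 * (r y ^ (k+1) * deriv r y))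
          ((((k:ℝ)+1+1) * ((k:ℝ)+1+1 - ν) / 2) * ((((k:ℝ)+1) * r x ^ k * deriv r x) * deriv r x
            + r x ^ (k+1) * deriv (deriv r) x)) x := by
        have hp : HasDerivAt (fun y => r y ^ (k+1)) ((((k:ℝ))+1) * r x ^ k * deriv r x) x := by
          have := ((hd x).hasDerivAt).pow (k+1)
          simp only [Nat.cast_add, Nat.cast_one, Nat.add_sub_cancel] at this; exact this
        exact (hp.mul ((hd' x).hasDerivAt)).const_mul _
      rw [hder.deriv, hs x]
      ring

lemma choose_two_real : ∀ k : ℕ, ((k.choose 2 : ℕ) : ℝ) * 2 = (k:ℝ) * ((k:ℝ) - 1) := by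
  intro k
  induction k with
  | zero => norm_num
  | succ m ih =>
      rw [Nat.choose_succ_succ]
      push_cast at ih ⊢
      rw [Nat.choose_one_right] at *
      nlinarith [ih]

lemma choose_three_real : ∀ k : ℕ,
    ((k.choose 3 : ℕ) : ℝ) * 6 = (k:ℝ) * ((k:ℝ) - 1) * ((k:ℝ) - 2) := by
  intro k
  induction k with
  | zero => norm_num
  | succ m ih =>
      rw [Nat.choose_succ_succ]
      have h2 := choose_two_real m
      push_cast at ih h2 ⊢
      nlinarith [ih, h2]

/-- For n ≥ 2, r smooth nonvanishing and s = −((n−1)/2)·r', one has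
Kₙ² = rⁿ · C(n+1,3) · 𝒜(r), i.e. Aₙ² = C(n+1,3)·𝒜(r). -/
theorem K_n_2_normal_form (r s : ℝ → ℝ)
    (hr : ContDiff ℝ (⊤ : ℕ∞) r) (hr0 : ∀ x : ℝ, r x ≠ 0)
    (n : ℕ) (hn : 2 ≤ n)
    (hs : ∀ x : ℝ, s x = -(((n : ℝ) - 1) / 2) * deriv r x) :
    ∀ x : ℝ, Kcoef r s n 2 x = r x ^ n * ((n + 1).choose 3 : ℝ) * calA r x := by
  have hd : Differentiable ℝ r := hr.differentiable (by simp)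
  have h1 : ContDiff ℝ ((⊤:ℕ∞):WithTop ℕ∞) r := hr.of_le (by simp)
  have hd' : Differentiable ℝ (deriv r) :=
    ((contDiff_infty_iff_deriv.mp h1).2).differentiable (by simp)
  obtain ⟨k, rfl⟩ : ∃ k, n = k + 2 := ⟨n - 2, by omega⟩
  intro x
  have hs' : ∀ x : ℝ, s x = -((((k:ℝ)+2) - 1) / 2) * deriv r x := by
    intro x; rw [hs x]; push_cast; ring_nf
  have h2 := Kcoef_two r s hd hd' ((k:ℝ)+2) hs' k x
  rw [h2, calA]
  have hC := choose_three_real (k + 3)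
  push_cast at hC
  have hCn : (((k + 2 + 1).choose 3 : ℕ) : ℝ) = ((k:ℝ)+3) * ((k:ℝ)+2) * ((k:ℝ)+1) / 6 := by
    rw [show (k + 2 + 1 : ℕ) = k + 3 by omega] at *
    linarith [hC]
  rw [show (((k:ℕ) + 2 + 1).choose 3 : ℝ) = ((k:ℝ)+3) * ((k:ℝ)+2) * ((k:ℝ)+1) / 6 from by
    exact_mod_cast hCn]
  have hrx := hr0 x
  field_simp
  ring
end

section
/- Let u, q : ℝ → ℝ be smooth with u nonvanishing and u'' + q·u = 0 on ℝ. Take r = u² and s = −2·u·u' (so that s = −((3−1)/2)·r'). Then for every smooth y : ℝ → ℝ, Ψ³[y] = u⁶ · ( y''' + 4·q·y' + 2·q'·y ) on ℝ. -/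
/-- With r = u², s = −2uu' and u'' + qu = 0, one has
Ψ³[y] = u⁶·(y''' + 4q y' + 2q' y). -/
theorem psi_iter_three (u q : ℝ → ℝ)
    (hu : ContDiff ℝ (⊤ : ℕ∞) u) (hq : ContDiff ℝ (⊤ : ℕ∞) q)
    (hu0 : ∀ x : ℝ, u x ≠ 0)
    (hode : ∀ x : ℝ, deriv (deriv u) x + q x * u x = 0)
    (y : ℝ → ℝ) (hy : ContDiff ℝ (⊤ : ℕ∞) y) (x : ℝ) :
    PsiIter (fun t => u t ^ 2) (fun t => -2 * u t * deriv u t) 3 y x =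
      u x ^ 6 * (iteratedDeriv 3 y x + 4 * q x * deriv y x + 2 * deriv q x * y x) := by
  have hu' : ContDiff ℝ (((⊤ : ℕ∞)) : WithTop ℕ∞) u := hu.of_le (by simp)
  have hy' : ContDiff ℝ (((⊤ : ℕ∞)) : WithTop ℕ∞) y := hy.of_le (by simp)
  have hq' : ContDiff ℝ (((⊤ : ℕ∞)) : WithTop ℕ∞) q := hq.of_le (by simp)
  obtain ⟨du, hu1⟩ := contDiff_infty_iff_deriv.mp hu'
  obtain ⟨du1, hu2⟩ := contDiff_infty_iff_deriv.mp hu1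
  obtain ⟨du2, -⟩ := contDiff_infty_iff_deriv.mp hu2
  obtain ⟨dy, hy1⟩ := contDiff_infty_iff_deriv.mp hy'
  obtain ⟨dy1, hy2⟩ := contDiff_infty_iff_deriv.mp hy1
  obtain ⟨dy2, -⟩ := contDiff_infty_iff_deriv.mp hy2
  obtain ⟨dq, -⟩ := contDiff_infty_iff_deriv.mp hq'
  have Hu : ∀ t : ℝ, HasDerivAt u (deriv u t) t := fun t => (du t).hasDerivAt
  have Hu1 : ∀ t : ℝ, HasDerivAt (deriv u) (deriv (deriv u) t) t := fun t => (du1 t).hasDerivAt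
  have Hu2 : ∀ t : ℝ, HasDerivAt (deriv (deriv u)) (deriv (deriv (deriv u)) t) t :=
    fun t => (du2 t).hasDerivAt
  have Hy : ∀ t : ℝ, HasDerivAt y (deriv y t) t := fun t => (dy t).hasDerivAt
  have Hy1 : ∀ t : ℝ, HasDerivAt (deriv y) (deriv (deriv y) t) t := fun t => (dy1 t).hasDerivAt
  have Hy2 : ∀ t : ℝ, HasDerivAt (deriv (deriv y)) (deriv (deriv (deriv y)) t) t :=
    fun t => (dy2 t).hasDerivAt
  have Hq : ∀ t : ℝ, HasDerivAt q (deriv q t) t :=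
    fun t => (dq t).hasDerivAt
  set r : ℝ → ℝ := fun t => u t ^ 2 with hrdef
  set s : ℝ → ℝ := fun t => -2 * u t * deriv u t with hsdef
  set P1 : ℝ → ℝ := Psi r s y with hP1def
  set P2 : ℝ → ℝ := Psi r s P1 with hP2def
  -- first derivative of P1
  have e1 : deriv P1 = fun t =>
      u t ^ 2 * deriv (deriv y) t
        - 2 * ((deriv u t) ^ 2 + u t * deriv (deriv u) t) * y t := by
    funext t
    have h := (((Hu t).pow 2).mul (Hy1 t)).add
        ((((hasDerivAt_const t (-2 : ℝ)).mul (Hu t)).mul (Hu1 t)).mul (Hy t))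
    have h' : HasDerivAt P1 _ t := h
    rw [h'.deriv]; push_cast; simp only [Pi.mul_apply, Pi.pow_apply, Pi.sub_apply, Pi.add_apply]; ring
  -- closed form of P2
  have e2 : P2 = fun t =>
      u t ^ 4 * deriv (deriv y) t - 2 * u t ^ 3 * deriv u t * deriv y t
        + (2 * u t ^ 2 * (deriv u t) ^ 2 - 2 * u t ^ 3 * deriv (deriv u) t) * y t := by
    funext t
    have hp1 : P1 t = u t ^ 2 * deriv y t + -2 * u t * deriv u t * y t := rfl
    show u t ^ 2 * deriv P1 t + -2 * u t * deriv u t * P1 t = _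
    rw [e1, hp1]; ring
  -- derivative of P2 at any point
  have hd2 : ∀ t : ℝ, deriv P2 t =
      u t ^ 4 * deriv (deriv (deriv y)) t + 2 * u t ^ 3 * deriv u t * deriv (deriv y) t
        + (-4 * u t ^ 2 * (deriv u t) ^ 2 - 4 * u t ^ 3 * deriv (deriv u) t) * deriv y t
        + (4 * u t * (deriv u t) ^ 3 - 2 * u t ^ 2 * deriv u t * deriv (deriv u) t
            - 2 * u t ^ 3 * deriv (deriv (deriv u)) t) * y t := by
    intro t
    have h := ((((Hu t).pow 4).mul (Hy2 t)).sub
        ((((hasDerivAt_const t (2 : ℝ)).mul ((Hu t).pow 3)).mul (Hu1 t)).mul (Hy1 t))).add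
        (((((hasDerivAt_const t (2 : ℝ)).mul ((Hu t).pow 2)).mul ((Hu1 t).pow 2)).sub
          (((hasDerivAt_const t (2 : ℝ)).mul ((Hu t).pow 3)).mul (Hu2 t))).mul (Hy t))
    have h' : HasDerivAt (fun t =>
        u t ^ 4 * deriv (deriv y) t - 2 * u t ^ 3 * deriv u t * deriv y t
          + (2 * u t ^ 2 * (deriv u t) ^ 2 - 2 * u t ^ 3 * deriv (deriv u) t) * y t) _ t := h
    rw [← e2] at h'
    rw [h'.deriv]; push_cast; simp only [Pi.mul_apply, Pi.pow_apply, Pi.sub_apply, Pi.add_apply]; ring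
  -- the ODE and its derivative
  have h2 : deriv (deriv u) = fun t => -(q t * u t) :=
    funext fun t => by linarith [hode t]
  have h3 : deriv (deriv (deriv u)) x = -(deriv q x * u x + q x * deriv u x) := by
    rw [h2]
    exact (((Hq x).mul (Hu x)).neg).deriv
  have hit : iteratedDeriv 3 y x = deriv (deriv (deriv y)) x := by
    rw [show (3 : ℕ) = 2 + 1 from rfl, iteratedDeriv_succ,
      show (2 : ℕ) = 1 + 1 from rfl, iteratedDeriv_succ, iteratedDeriv_one]
  have hgoal : PsiIter r s 3 y x = u x ^ 2 * deriv P2 x + -2 * u x * deriv u x * P2 x := rfl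
  rw [hgoal, hd2 x, e2, hit]
  simp only []
  rw [show deriv (deriv u) x = -(q x * u x) from by rw [h2], h3]
  ring
end

section
/- Let u, q : ℝ → ℝ be smooth with u nonvanishing and u'' + q·u = 0 on ℝ. Take r = u² and s = −3·u·u' (so that s = −((4−1)/2)·r'). Then for every smooth y : ℝ → ℝ, Ψ⁴[y] = u⁸ · ( y'''' + 10·q·y'' + 10·q'·y' + 3·(3·q² + q'')·y ) on ℝ. -/
/-- With r = u², s = −3uu' and u'' + qu = 0, one has
Ψ⁴[y] = u⁸·(y'''' + 10q y'' + 10q' y' + 3(3q² + q'') y). -/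
theorem psi_iter_four (u q : ℝ → ℝ)
    (hu : ContDiff ℝ (⊤ : ℕ∞) u) (hq : ContDiff ℝ (⊤ : ℕ∞) q)
    (hu0 : ∀ x : ℝ, u x ≠ 0)
    (hode : ∀ x : ℝ, deriv (deriv u) x + q x * u x = 0)
    (y : ℝ → ℝ) (hy : ContDiff ℝ (⊤ : ℕ∞) y) (x : ℝ) :
    PsiIter (fun t => u t ^ 2) (fun t => -3 * u t * deriv u t) 4 y x =
      u x ^ 8 * (iteratedDeriv 4 y x + 10 * q x * iteratedDeriv 2 y x +
        10 * deriv q x * deriv y x + 3 * (3 * q x ^ 2 + deriv (deriv q) x) * y x) := by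
  have hu' : ContDiff ℝ ((⊤ : ℕ∞) : WithTop ℕ∞) (deriv u) := (contDiff_infty_iff_deriv.mp (hu.of_le (by simp))).2
  have hq' : ContDiff ℝ ((⊤ : ℕ∞) : WithTop ℕ∞) (deriv q) := (contDiff_infty_iff_deriv.mp (hq.of_le (by simp))).2
  have hy1 : ContDiff ℝ ((⊤ : ℕ∞) : WithTop ℕ∞) (deriv y) := (contDiff_infty_iff_deriv.mp (hy.of_le (by simp))).2
  have hy2 : ContDiff ℝ ((⊤ : ℕ∞) : WithTop ℕ∞) (deriv (deriv y)) := (contDiff_infty_iff_deriv.mp hy1).2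
  have hy3 : ContDiff ℝ ((⊤ : ℕ∞) : WithTop ℕ∞) (deriv (deriv (deriv y))) := (contDiff_infty_iff_deriv.mp hy2).2
  have Hu : ∀ t, HasDerivAt u (deriv u t) t := fun t => (hu.differentiable (by simp) t).hasDerivAt
  have Hu' : ∀ t, HasDerivAt (deriv u) (-(q t * u t)) t := by
    intro t
    have h := (hu'.differentiable (by simp) t).hasDerivAt
    have e : deriv (deriv u) t = -(q t * u t) := by linarith [hode t]
    rwa [e] at h
  have Hq : ∀ t, HasDerivAt q (deriv q t) t := fun t => (hq.differentiable (by simp) t).hasDerivAt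
  have Hq' : ∀ t, HasDerivAt (deriv q) (deriv (deriv q) t) t :=
    fun t => (hq'.differentiable (by simp) t).hasDerivAt
  have Hy : ∀ t, HasDerivAt y (deriv y t) t := fun t => (hy.differentiable (by simp) t).hasDerivAt
  have Hy1 : ∀ t, HasDerivAt (deriv y) (deriv (deriv y) t) t :=
    fun t => (hy1.differentiable (by simp) t).hasDerivAt
  have Hy2 : ∀ t, HasDerivAt (deriv (deriv y)) (deriv (deriv (deriv y)) t) t :=
    fun t => (hy2.differentiable (by simp) t).hasDerivAt
  have Hy3 : ∀ t, HasDerivAt (deriv (deriv (deriv y))) (deriv (deriv (deriv (deriv y))) t) t :=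
    fun t => (hy3.differentiable (by simp) t).hasDerivAt
  -- layer 1
  have dA1 : ∀ t, HasDerivAt (fun t => u t ^ 2 * deriv y t + -3 * u t * deriv u t * y t)
      (u t ^ 2 * deriv (deriv y) t - u t * deriv u t * deriv y t
        + (3 * q t * u t ^ 2 - 3 * deriv u t ^ 2) * y t) t := by
    intro t
    have h := (((Hu t).pow 2).mul (Hy1 t)).add
      ((((Hu t).const_mul (-3 : ℝ)).mul (Hu' t)).mul (Hy t))
    refine h.congr_deriv ?_
    simp only [Pi.mul_apply, Pi.pow_apply, Pi.add_apply, Pi.sub_apply]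
    push_cast
    ring
  have h2 : Psi (fun t => u t ^ 2) (fun t => -3 * u t * deriv u t)
      (fun t => u t ^ 2 * deriv y t + -3 * u t * deriv u t * y t)
      = fun t => u t ^ 4 * deriv (deriv y) t - 4 * u t ^ 3 * deriv u t * deriv y t
          + (3 * q t * u t ^ 4 + 6 * u t ^ 2 * deriv u t ^ 2) * y t := by
    funext t
    show u t ^ 2 * deriv (fun t => u t ^ 2 * deriv y t + -3 * u t * deriv u t * y t) t
      + -3 * u t * deriv u t * (u t ^ 2 * deriv y t + -3 * u t * deriv u t * y t) = _
    rw [(dA1 t).deriv]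
    ring
  -- layer 2
  have dA2 : ∀ t, HasDerivAt (fun t => u t ^ 4 * deriv (deriv y) t
      - 4 * u t ^ 3 * deriv u t * deriv y t
      + (3 * q t * u t ^ 4 + 6 * u t ^ 2 * deriv u t ^ 2) * y t)
      (u t ^ 4 * deriv (deriv (deriv y)) t
        + (7 * q t * u t ^ 4 - 6 * u t ^ 2 * deriv u t ^ 2) * deriv y t
        + (3 * deriv q t * u t ^ 4 + 12 * u t * deriv u t ^ 3) * y t) t := by
    intro t
    have h := ((((Hu t).pow 4).mul (Hy2 t)).sub
        (((((Hu t).pow 3).const_mul (4 : ℝ)).mul (Hu' t)).mul (Hy1 t))).add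
      (((((Hq t).const_mul (3 : ℝ)).mul ((Hu t).pow 4)).add
        ((((Hu t).pow 2).const_mul (6 : ℝ)).mul ((Hu' t).pow 2))).mul (Hy t))
    refine h.congr_deriv ?_
    simp only [Pi.mul_apply, Pi.pow_apply, Pi.add_apply, Pi.sub_apply]
    push_cast
    ring
  have h3 : Psi (fun t => u t ^ 2) (fun t => -3 * u t * deriv u t)
      (fun t => u t ^ 4 * deriv (deriv y) t - 4 * u t ^ 3 * deriv u t * deriv y t
        + (3 * q t * u t ^ 4 + 6 * u t ^ 2 * deriv u t ^ 2) * y t)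
      = fun t => u t ^ 6 * deriv (deriv (deriv y)) t
          - 3 * u t ^ 5 * deriv u t * deriv (deriv y) t
          + (7 * q t * u t ^ 6 + 6 * u t ^ 4 * deriv u t ^ 2) * deriv y t
          + (3 * deriv q t * u t ^ 6 - 9 * q t * u t ^ 5 * deriv u t
              - 6 * u t ^ 3 * deriv u t ^ 3) * y t := by
    funext t
    show u t ^ 2 * deriv (fun t => u t ^ 4 * deriv (deriv y) t
        - 4 * u t ^ 3 * deriv u t * deriv y t
        + (3 * q t * u t ^ 4 + 6 * u t ^ 2 * deriv u t ^ 2) * y t) t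
      + -3 * u t * deriv u t * (u t ^ 4 * deriv (deriv y) t
        - 4 * u t ^ 3 * deriv u t * deriv y t
        + (3 * q t * u t ^ 4 + 6 * u t ^ 2 * deriv u t ^ 2) * y t) = _
    rw [(dA2 t).deriv]
    ring
  -- layer 3
  have dA3 : ∀ t, HasDerivAt (fun t => u t ^ 6 * deriv (deriv (deriv y)) t
      - 3 * u t ^ 5 * deriv u t * deriv (deriv y) t
      + (7 * q t * u t ^ 6 + 6 * u t ^ 4 * deriv u t ^ 2) * deriv y t
      + (3 * deriv q t * u t ^ 6 - 9 * q t * u t ^ 5 * deriv u t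
          - 6 * u t ^ 3 * deriv u t ^ 3) * y t)
      (u t ^ 6 * deriv (deriv (deriv (deriv y))) t
        + 3 * u t ^ 5 * deriv u t * deriv (deriv (deriv y)) t
        + (10 * q t * u t ^ 6 - 9 * u t ^ 4 * deriv u t ^ 2) * deriv (deriv y) t
        + (10 * deriv q t * u t ^ 6 + 21 * q t * u t ^ 5 * deriv u t
            + 18 * u t ^ 3 * deriv u t ^ 3) * deriv y t
        + (3 * deriv (deriv q) t * u t ^ 6 + 9 * deriv q t * u t ^ 5 * deriv u t
            - 27 * q t * u t ^ 4 * deriv u t ^ 2 + 9 * q t ^ 2 * u t ^ 6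
            - 18 * u t ^ 2 * deriv u t ^ 4) * y t) t := by
    intro t
    have h := (((((Hu t).pow 6).mul (Hy3 t)).sub
        (((((Hu t).pow 5).const_mul (3 : ℝ)).mul (Hu' t)).mul (Hy2 t))).add
      (((((Hq t).const_mul (7 : ℝ)).mul ((Hu t).pow 6)).add
        ((((Hu t).pow 4).const_mul (6 : ℝ)).mul ((Hu' t).pow 2))).mul (Hy1 t))).add
      (((((((Hq' t).const_mul (3 : ℝ)).mul ((Hu t).pow 6)).sub
        ((((Hq t).const_mul (9 : ℝ)).mul ((Hu t).pow 5)).mul (Hu' t))).sub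
        ((((Hu t).pow 3).const_mul (6 : ℝ)).mul ((Hu' t).pow 3))).mul (Hy t)))
    refine h.congr_deriv ?_
    simp only [Pi.mul_apply, Pi.pow_apply, Pi.add_apply, Pi.sub_apply]
    push_cast
    ring
  -- assemble
  have e0 : PsiIter (fun t => u t ^ 2) (fun t => -3 * u t * deriv u t) 4 y
      = Psi (fun t => u t ^ 2) (fun t => -3 * u t * deriv u t)
          (Psi (fun t => u t ^ 2) (fun t => -3 * u t * deriv u t)
            (Psi (fun t => u t ^ 2) (fun t => -3 * u t * deriv u t)
              (Psi (fun t => u t ^ 2) (fun t => -3 * u t * deriv u t) y))) := rfl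
  have e1 : Psi (fun t => u t ^ 2) (fun t => -3 * u t * deriv u t) y
      = fun t => u t ^ 2 * deriv y t + -3 * u t * deriv u t * y t := rfl
  rw [e0, e1, h2, h3]
  show u x ^ 2 * deriv (fun t => u t ^ 6 * deriv (deriv (deriv y)) t
      - 3 * u t ^ 5 * deriv u t * deriv (deriv y) t
      + (7 * q t * u t ^ 6 + 6 * u t ^ 4 * deriv u t ^ 2) * deriv y t
      + (3 * deriv q t * u t ^ 6 - 9 * q t * u t ^ 5 * deriv u t
          - 6 * u t ^ 3 * deriv u t ^ 3) * y t) x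
    + -3 * u x * deriv u x * (u x ^ 6 * deriv (deriv (deriv y)) x
      - 3 * u x ^ 5 * deriv u x * deriv (deriv y) x
      + (7 * q x * u x ^ 6 + 6 * u x ^ 4 * deriv u x ^ 2) * deriv y x
      + (3 * deriv q x * u x ^ 6 - 9 * q x * u x ^ 5 * deriv u x
          - 6 * u x ^ 3 * deriv u x ^ 3) * y x) = _
  rw [(dA3 x).deriv]
  have i2 : iteratedDeriv 2 y = deriv (deriv y) := by
    simp [iteratedDeriv_succ, iteratedDeriv_zero]
  have i4 : iteratedDeriv 4 y = deriv (deriv (deriv (deriv y))) := by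
    simp [iteratedDeriv_succ, iteratedDeriv_zero]
  rw [i2, i4]
  ring
end

section
/- Let n ≥ 1, let r : ℝ → ℝ be smooth with r(x) > 0 for all x, set s = −((n−1)/2)·r', let h : ℝ → ℝ be smooth with h' = 1/r on ℝ, and let λ ≠ 0 be a real constant. If w : ℝ → ℝ is a smooth function with w^{(n)} = 0 identically on ℝ, then the function y(x) = λ · r(x)^{(n−1)/2} · w(h(x)) satisfies Ψⁿ[y] = 0 identically on ℝ. (This is the forward direction of the theorem that a linear equation is iterative if and only if it is reducible to the canonical form w^{(n)} = 0 by an invertible point transformation of the form x = f(z), y = λ·f'(z)^{(n−1)/2}·w, with f the inverse of h = ∫ dx/r.) -/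
lemma psi_step_aux (r h : ℝ → ℝ) (hr : ContDiff ℝ (⊤ : ℕ∞) r) (hrpos : ∀ x : ℝ, 0 < r x)
    (hh : ContDiff ℝ (⊤ : ℕ∞) h) (hh' : ∀ x : ℝ, deriv h x = 1 / r x)
    (α lam : ℝ) (u : ℝ → ℝ) (hu : Differentiable ℝ u) (x : ℝ) :
    Psi r (fun t => -α * deriv r t) (fun t => lam * r t ^ α * u (h t)) x
      = lam * r x ^ α * deriv u (h x) := by
  have hrd : HasDerivAt r (deriv r x) x :=
    ((hr.differentiable (by simp)) x).hasDerivAt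
  have h1 : HasDerivAt (fun t => r t ^ α) (deriv r x * α * r x ^ (α - 1)) x :=
    hrd.rpow_const (Or.inl (ne_of_gt (hrpos x)))
  have hhd : HasDerivAt h (deriv h x) x := ((hh.differentiable (by simp)) x).hasDerivAt
  have h2 : HasDerivAt (fun t => u (h t)) (deriv u (h x) * deriv h x) x :=
    (hu (h x)).hasDerivAt.comp x hhd
  have h3 : HasDerivAt (fun t => lam * r t ^ α * u (h t))
      (lam * (deriv r x * α * r x ^ (α - 1) * u (h x) +
        r x ^ α * (deriv u (h x) * deriv h x))) x := by
    have := (h1.mul h2).const_mul lam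
    simpa [mul_assoc] using this
  have hd := h3.deriv
  simp only [Psi, hd, hh' x]
  have hrx : r x ≠ 0 := ne_of_gt (hrpos x)
  have hsub : r x ^ (α - 1) = r x ^ α / r x := Real.rpow_sub_one hrx α
  rw [hsub]
  field_simp
  ring

lemma psiiter_main (r h : ℝ → ℝ) (hr : ContDiff ℝ (⊤ : ℕ∞) r) (hrpos : ∀ x : ℝ, 0 < r x)
    (hh : ContDiff ℝ (⊤ : ℕ∞) h) (hh' : ∀ x : ℝ, deriv h x = 1 / r x)
    (α lam : ℝ) :
    ∀ (m : ℕ) (u : ℝ → ℝ), ContDiff ℝ (⊤ : ℕ∞) u → ∀ x : ℝ,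
      PsiIter r (fun t => -α * deriv r t) m (fun t => lam * r t ^ α * u (h t)) x
        = lam * r x ^ α * iteratedDeriv m u (h x) := by
  intro m
  induction m with
  | zero => intro u hu x; simp [PsiIter]
  | succ m ih =>
    intro u hu x
    have hstep : Psi r (fun t => -α * deriv r t) (fun t => lam * r t ^ α * u (h t))
        = fun t => lam * r t ^ α * (deriv u) (h t) := by
      funext t
      exact psi_step_aux r h hr hrpos hh hh' α lam u (hu.differentiable (by simp)) t
    show PsiIter r (fun t => -α * deriv r t) m
      (Psi r (fun t => -α * deriv r t) (fun t => lam * r t ^ α * u (h t))) x = _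
    have hdu : ContDiff ℝ (⊤ : ℕ∞) (deriv u) := by
      have h2 : ContDiff ℝ (((⊤ : ℕ∞) : WithTop ℕ∞) + 1) u := hu.of_le (by exact_mod_cast le_top)
      exact (contDiff_succ_iff_deriv.mp h2).2.2
    rw [hstep, ih (deriv u) hdu, ← iteratedDeriv_succ']

/-- Forward direction of reducibility: if w^{(n)} = 0 then
y = λ·r^{(n−1)/2}·(w ∘ h) solves the iterative equation Ψⁿ[y] = 0,
where h' = 1/r and s = −((n−1)/2)·r'. -/
theorem canonical_to_iterative (n : ℕ) (hn : 1 ≤ n)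
    (r : ℝ → ℝ) (hr : ContDiff ℝ (⊤ : ℕ∞) r) (hrpos : ∀ x : ℝ, 0 < r x)
    (h : ℝ → ℝ) (hh : ContDiff ℝ (⊤ : ℕ∞) h) (hh' : ∀ x : ℝ, deriv h x = 1 / r x)
    (lam : ℝ) (hlam : lam ≠ 0)
    (w : ℝ → ℝ) (hw : ContDiff ℝ (⊤ : ℕ∞) w) (hwn : ∀ z : ℝ, iteratedDeriv n w z = 0)
    (x : ℝ) :
    PsiIter r (fun t => -(((n : ℝ) - 1) / 2) * deriv r t) n
      (fun t => lam * r t ^ (((n : ℝ) - 1) / 2) * w (h t)) x = 0 := by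
  rw [psiiter_main r h hr hrpos hh hh' (((n : ℝ) - 1) / 2) lam n w hw x, hwn (h x),
    mul_zero]
end

section
/- Let n ≥ 1, let u, q : ℝ → ℝ be smooth with u nonvanishing and u'' + q·u = 0 on ℝ, and let g : ℝ → ℝ be smooth with g' = 1/u² on ℝ. Take r = u² and s = −(n−1)·u·u' (so that s = −((n−1)/2)·r'). Then for each k with 0 ≤ k ≤ n−1, the function y_k(x) = u(x)^{n−1} · g(x)^k satisfies Ψⁿ[y_k] = 0 identically on ℝ. Hence n linearly independent solutions of the general n-th order iterative equation in normal form are expressible solely in terms of a single nonzero solution u of the second-order source equation. -/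
lemma psiIter_zero (r s : ℝ → ℝ) : ∀ M : ℕ, PsiIter r s M (fun _ => (0:ℝ)) = fun _ => 0
  | 0 => rfl
  | M + 1 => by
    show PsiIter r s M (Psi r s fun _ => (0:ℝ)) = fun _ => 0
    have : (Psi r s fun _ => (0:ℝ)) = fun _ => (0:ℝ) := by
      funext x
      simp [Psi]
    rw [this]
    exact psiIter_zero r s M

lemma psi_key (m : ℕ) (u g : ℝ → ℝ) (hu : ContDiff ℝ (⊤ : ℕ∞) u) (hg : ContDiff ℝ (⊤ : ℕ∞) g)
    (hu0 : ∀ x : ℝ, u x ≠ 0) (hg' : ∀ x : ℝ, deriv g x = 1 / u x ^ 2) (c : ℝ) (k : ℕ) :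
    Psi (fun t => u t ^ 2) (fun t => -(m : ℝ) * u t * deriv u t)
      (fun t => c * u t ^ m * g t ^ k) =
    fun t => (c * k) * u t ^ m * g t ^ (k - 1) := by
  funext x
  have hud : DifferentiableAt ℝ u x := hu.differentiable (by simp) x
  have hgd : DifferentiableAt ℝ g x := hg.differentiable (by simp) x
  have hupd : DifferentiableAt ℝ (fun t => c * u t ^ m) x := by fun_prop
  have hgpd : DifferentiableAt ℝ (fun t => g t ^ k) x := by fun_prop
  have hcud : DifferentiableAt ℝ (fun t => u t ^ m) x := by fun_prop
  unfold Psi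
  rw [deriv_fun_mul hupd hgpd, deriv_const_mul _ hcud, deriv_fun_pow hud m, deriv_fun_pow hgd k, hg']
  have hu2 : u x ^ 2 ≠ 0 := pow_ne_zero _ (hu0 x)
  rcases m with _ | j
  · field_simp [hu0 x]
    ring
  · simp only [Nat.add_sub_cancel]
    field_simp [hu0 x]
    ring

/-- With r = u², s = −(n−1)uu', u'' + qu = 0 and g' = 1/u², each
y_k = u^{n−1}·g^k (0 ≤ k ≤ n−1) solves Ψⁿ[y_k] = 0. -/
theorem solutions_single_u (n : ℕ) (hn : 1 ≤ n)
    (u q : ℝ → ℝ) (hu : ContDiff ℝ (⊤ : ℕ∞) u) (hq : ContDiff ℝ (⊤ : ℕ∞) q)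
    (hu0 : ∀ x : ℝ, u x ≠ 0)
    (hode : ∀ x : ℝ, deriv (deriv u) x + q x * u x = 0)
    (g : ℝ → ℝ) (hg : ContDiff ℝ (⊤ : ℕ∞) g) (hg' : ∀ x : ℝ, deriv g x = 1 / u x ^ 2)
    (k : ℕ) (hk : k ≤ n - 1) (x : ℝ) :
    PsiIter (fun t => u t ^ 2) (fun t => -((n : ℝ) - 1) * u t * deriv u t) n
      (fun t => u t ^ (n - 1) * g t ^ k) x = 0 := by
  obtain ⟨m, rfl⟩ : ∃ m, n = m + 1 := ⟨n - 1, (Nat.succ_pred_eq_of_pos hn).symm⟩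
  have hs : (fun t => -(((m + 1 : ℕ) : ℝ) - 1) * u t * deriv u t)
      = fun t => -(m : ℝ) * u t * deriv u t := by
    funext t; push_cast; ring_nf
  rw [hs]
  simp only [Nat.add_sub_cancel] at hk ⊢
  -- main claim by induction
  have main : ∀ M : ℕ, ∀ k : ℕ, k < M → ∀ c : ℝ, ∀ x : ℝ,
      PsiIter (fun t => u t ^ 2) (fun t => -(m : ℝ) * u t * deriv u t) M
        (fun t => c * u t ^ m * g t ^ k) x = 0 := by
    intro M
    induction M with
    | zero => intro k hk; omega
    | succ M ih =>
      intro k hk c x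
      show PsiIter _ _ M (Psi _ _ _) x = 0
      rw [psi_key m u g hu hg hu0 hg' c k]
      rcases k with _ | j
      · have : (fun t => (c * ((0:ℕ) : ℝ)) * u t ^ m * g t ^ (0 - 1)) = fun _ => (0:ℝ) := by
          funext t; simp
        rw [this, psiIter_zero]
      · exact ih j (by omega) (c * (j + 1 : ℕ)) x
  have := main (m + 1) k (by omega) 1 x
  simpa using this
end

section
/- Let n ≥ 1, let u, q : ℝ → ℝ be smooth with u nonvanishing and u'' + q·u = 0 on ℝ, and let g : ℝ → ℝ be smooth with g' = 1/u² on ℝ. Define y_k(x) = u(x)^{n−1} · g(x)^k for 0 ≤ k ≤ n−1. Then for every x ∈ ℝ, the Wronskian determinant det( (i, k) ↦ y_k^{(i)}(x) ), with i, k ranging over 0, …, n−1, equals the nonzero constant ∏_{j=1}^{n−1} j!. In particular the functions y_0, …, y_{n−1} are linearly independent. -/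
open scoped ContDiff
open Finset

private lemma one_le_infty : (1 : WithTop ℕ∞) ≤ ∞ := by exact_mod_cast le_top

private lemma deriv_descFactorial_pow (g : ℝ → ℝ) (hg : ContDiff ℝ ∞ g) (j k : ℕ) (x : ℝ) :
    deriv (fun t => (k.descFactorial j : ℝ) * g t ^ (k - j)) x
      = deriv g x * ((k.descFactorial (j + 1) : ℝ) * g x ^ (k - (j + 1))) := by
  rcases le_or_gt k j with h | h
  · have h1 : k - j = 0 := Nat.sub_eq_zero_of_le h
    have h2 : k.descFactorial (j + 1) = 0 :=
      Nat.descFactorial_eq_zero_iff_lt.mpr (Nat.lt_succ_of_le h)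
    simp [h1, h2]
  · have hdg : DifferentiableAt ℝ g x := (hg.differentiable (by simp)).differentiableAt
    rw [deriv_const_mul _ (hdg.fun_pow _), deriv_fun_pow hdg _]
    have h3 : (k - j) - 1 = k - (j + 1) := by omega
    have h4 : (k.descFactorial (j + 1) : ℝ) = ((k - j : ℕ) : ℝ) * k.descFactorial j := by
      rw [Nat.descFactorial_succ]; push_cast; ring
    rw [h3, h4]; ring

private lemma exists_C (u g : ℝ → ℝ) (hu : ContDiff ℝ ∞ u) (hg : ContDiff ℝ ∞ g)
    (m : ℕ) (i : ℕ) :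
    ∃ C : ℕ → ℝ → ℝ, (∀ j, ContDiff ℝ ∞ (C j)) ∧ (∀ j, i < j → ∀ x, C j x = 0) ∧
      (∀ x, C i x = u x ^ m * deriv g x ^ i) ∧
      (∀ k : ℕ, ∀ x : ℝ, iteratedDeriv i (fun t => u t ^ m * g t ^ k) x
        = ∑ j ∈ Finset.range (i + 1), C j x * ((k.descFactorial j : ℝ) * g x ^ (k - j))) := by
  induction i with
  | zero =>
      refine ⟨fun j => if j = 0 then (fun x => u x ^ m) else 0, ?_, ?_, ?_, ?_⟩
      · intro j
        by_cases hj : j = 0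
        · simpa [hj] using hu.pow m
        · simp only [hj, ↓reduceIte]; exact contDiff_zero_fun
      · intro j hj x
        show (if j = 0 then (fun x => u x ^ m) else 0) x = 0
        rw [if_neg (by omega : ¬ j = 0)]; rfl
      · intro x; simp
      · intro k x; simp [iteratedDeriv_zero]
  | succ i ih =>
      obtain ⟨C, hCsm, hCz, hCtop, hCsum⟩ := ih
      have hCfun : ∀ j, i < j → C j = fun _ => (0 : ℝ) := fun j hj => funext (hCz j hj)
      refine ⟨fun j => Nat.rec (deriv (C 0)) (fun j' _ => fun x => deriv (C (j' + 1)) x + C j' x * deriv g x) j,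
        ?_, ?_, ?_, ?_⟩
      · intro j
        cases j with
        | zero => exact (contDiff_infty_iff_deriv.mp (hCsm 0)).2
        | succ j' =>
            exact ((contDiff_infty_iff_deriv.mp (hCsm (j' + 1))).2).add
              ((hCsm j').mul (contDiff_infty_iff_deriv.mp hg).2)
      · intro j hj x
        cases j with
        | zero => omega
        | succ j' =>
            have h1 : deriv (C (j' + 1)) x = 0 := by
              rw [hCfun (j' + 1) (by omega)]; simp
            have h2 : C j' x = 0 := hCz j' (by omega) x
            simp [h1, h2]
      · intro x
        have h1 : deriv (C (i + 1)) x = 0 := by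
          rw [hCfun (i + 1) (by omega)]; simp
        simp only [h1, hCtop x]
        ring
      · intro k x
        set v : ℕ → ℝ → ℝ := fun j t => (k.descFactorial j : ℝ) * g t ^ (k - j) with hv
        have hvdiff : ∀ j, Differentiable ℝ (v j) :=
          fun j => ((contDiff_const.mul (hg.pow _)).differentiable (by simp))
        have hCdiff : ∀ j, Differentiable ℝ (C j) := fun j => (hCsm j).differentiable (by simp)
        have hfun : iteratedDeriv i (fun t => u t ^ m * g t ^ k)
            = fun y => ∑ j ∈ Finset.range (i + 1), C j y * v j y := funext (fun y => hCsum k y)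
        rw [iteratedDeriv_succ, hfun,
          deriv_fun_sum (fun j _ => ((hCdiff j x).fun_mul (hvdiff j x)))]
        have hterm : ∀ j ∈ Finset.range (i + 1),
            deriv (fun y => C j y * v j y) x
              = deriv (C j) x * v j x + C j x * (deriv g x * v (j + 1) x) := by
          intro j _
          rw [deriv_fun_mul (hCdiff j x) (hvdiff j x), deriv_descFactorial_pow g hg j k x]
        rw [Finset.sum_congr rfl hterm]
        have hsplit : ∑ j ∈ Finset.range (i + 1 + 1),
            (Nat.rec (deriv (C 0)) (fun j' _ => fun x => deriv (C (j' + 1)) x + C j' x * deriv g x) j : ℝ → ℝ) x * v j x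
            = (∑ j ∈ Finset.range (i + 1), (deriv (C (j + 1)) x + C j x * deriv g x) * v (j + 1) x)
              + deriv (C 0) x * v 0 x := by
          rw [Finset.sum_range_succ']
          rfl
        have hd0 : deriv (C (i + 1)) x = 0 := by
          rw [hCfun (i + 1) (by omega)]; simp
        have h1 : ∑ j ∈ Finset.range (i + 1), deriv (C j) x * v j x
            = deriv (C 0) x * v 0 x + ∑ j ∈ Finset.range (i + 1), deriv (C (j + 1)) x * v (j + 1) x := by
          have h3 := Finset.sum_range_succ' (fun j => deriv (C j) x * v j x) (i + 1)
          have h2 : ∑ j ∈ Finset.range (i + 1 + 1), deriv (C j) x * v j x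
              = ∑ j ∈ Finset.range (i + 1), deriv (C j) x * v j x := by
            rw [Finset.sum_range_succ, hd0]; ring
          rw [h2] at h3
          rw [h3]; ring
        have e1 : ∑ j ∈ Finset.range (i + 1), C j x * (deriv g x * v (j + 1) x)
            = ∑ j ∈ Finset.range (i + 1), C j x * deriv g x * v (j + 1) x :=
          Finset.sum_congr rfl fun j _ => by ring
        have e2 : ∑ j ∈ Finset.range (i + 1), (deriv (C (j + 1)) x + C j x * deriv g x) * v (j + 1) x
            = (∑ j ∈ Finset.range (i + 1), deriv (C (j + 1)) x * v (j + 1) x)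
              + ∑ j ∈ Finset.range (i + 1), C j x * deriv g x * v (j + 1) x := by
          rw [← Finset.sum_add_distrib]
          exact Finset.sum_congr rfl fun j _ => by ring
        rw [Finset.sum_add_distrib, h1, hsplit, e2, e1]
        ring

private lemma iteratedDeriv_sum_mul {n : ℕ} (f : Fin n → ℝ → ℝ) (c : Fin n → ℝ) (i : ℕ) :
    (∀ k, ContDiff ℝ ∞ (f k)) →
    ∀ x : ℝ, iteratedDeriv i (fun t => ∑ k : Fin n, c k * f k t) x
      = ∑ k : Fin n, c k * iteratedDeriv i (f k) x := by
  induction i generalizing f with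
  | zero => intro hf x; simp [iteratedDeriv_zero]
  | succ i ih =>
      intro hf x
      have hstep : deriv (fun t => ∑ k : Fin n, c k * f k t)
          = fun t => ∑ k : Fin n, c k * deriv (f k) t := by
        funext y
        rw [deriv_fun_sum (fun k _ =>
          (((hf k).differentiable (by simp)) y).const_mul (c k))]
        exact Finset.sum_congr rfl fun k _ =>
          deriv_const_mul (c k) (((hf k).differentiable (by simp)) y)
      rw [iteratedDeriv_succ', hstep,
        ih (fun k => deriv (f k)) (fun k => (contDiff_infty_iff_deriv.mp (hf k)).2) x]
      exact Finset.sum_congr rfl fun k _ => by rw [iteratedDeriv_succ']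

/-- The Wronskian of y_k = u^{n−1}·g^k (0 ≤ k ≤ n−1), where u'' + qu = 0 and
g' = 1/u², equals the nonzero constant ∏_{j=1}^{n−1} j!; in particular the y_k
are linearly independent. -/
theorem wronskian_constant (n : ℕ) (hn : 1 ≤ n)
    (u q : ℝ → ℝ) (hu : ContDiff ℝ (⊤ : ℕ∞) u) (hq : ContDiff ℝ (⊤ : ℕ∞) q)
    (hu0 : ∀ x : ℝ, u x ≠ 0)
    (hode : ∀ x : ℝ, deriv (deriv u) x + q x * u x = 0)
    (g : ℝ → ℝ) (hg : ContDiff ℝ (⊤ : ℕ∞) g) (hg' : ∀ x : ℝ, deriv g x = 1 / u x ^ 2) :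
    (∀ x : ℝ,
      Matrix.det (Matrix.of fun i k : Fin n =>
        iteratedDeriv (i : ℕ) (fun t => u t ^ (n - 1) * g t ^ (k : ℕ)) x) =
      ∏ j ∈ Finset.range n, (Nat.factorial j : ℝ)) ∧
    LinearIndependent ℝ (fun k : Fin n => fun t : ℝ => u t ^ (n - 1) * g t ^ (k : ℕ)) := by
  have hu' : ContDiff ℝ ∞ u := hu.of_le (by simp)
  have hgi : ContDiff ℝ ∞ g := hg.of_le (by simp)
  set m := n - 1 with hm
  choose C hsm hz htop hsum using fun i : ℕ => exists_C u g hu' hgi m i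
  have key : ∀ x : ℝ,
      Matrix.det (Matrix.of fun i k : Fin n =>
        iteratedDeriv (i : ℕ) (fun t => u t ^ m * g t ^ (k : ℕ)) x) =
      ∏ j ∈ Finset.range n, (Nat.factorial j : ℝ) := by
    intro x
    set L : Matrix (Fin n) (Fin n) ℝ := Matrix.of fun i j : Fin n => C (i : ℕ) (j : ℕ) x with hL
    set V : Matrix (Fin n) (Fin n) ℝ := Matrix.of fun j k : Fin n =>
      ((k : ℕ).descFactorial (j : ℕ) : ℝ) * g x ^ ((k : ℕ) - (j : ℕ)) with hV
    have hfact : (Matrix.of fun i k : Fin n =>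
        iteratedDeriv (i : ℕ) (fun t => u t ^ m * g t ^ (k : ℕ)) x) = L * V := by
      ext i k
      rw [Matrix.mul_apply]
      simp only [Matrix.of_apply, hL, hV]
      rw [hsum (i : ℕ) (k : ℕ) x]
      rw [Fin.sum_univ_eq_sum_range
        (fun j => C (i : ℕ) j x * (((k : ℕ).descFactorial j : ℝ) * g x ^ ((k : ℕ) - j))) n]
      refine Finset.sum_subset (Finset.range_subset_range.mpr i.2) ?_
      intro j _ hj
      have : (i : ℕ) < j := by simp [Finset.mem_range] at hj ⊢; omega
      rw [hz _ _ this x]; ring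
    rw [hfact, Matrix.det_mul]
    have hdetL : L.det = ∏ i : Fin n, (u x ^ m * deriv g x ^ (i : ℕ)) := by
      rw [Matrix.det_of_lowerTriangular L (fun i j hij => by
        exact (by rw [hz _ _ (by exact hij) x] : C (i : ℕ) (j : ℕ) x = 0))]
      exact Finset.prod_congr rfl fun i _ => htop (i : ℕ) x
    have hVt : V.BlockTriangular id := by
      intro j k hkj
      have hlt : (k : ℕ) < (j : ℕ) := hkj
      show ((k : ℕ).descFactorial (j : ℕ) : ℝ) * g x ^ ((k : ℕ) - (j : ℕ)) = 0
      rw [Nat.descFactorial_eq_zero_iff_lt.mpr hlt]; simp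
    have hdetV : V.det = ∏ k : Fin n, ((k : ℕ).factorial : ℝ) := by
      rw [Matrix.det_of_upperTriangular hVt]
      refine Finset.prod_congr rfl fun k _ => ?_
      simp [hV, Nat.descFactorial_self]
    rw [hdetL, hdetV]
    have hone : (∏ i : Fin n, (u x ^ m * deriv g x ^ (i : ℕ))) = 1 := by
      rw [Fin.prod_univ_eq_prod_range (fun i => u x ^ m * deriv g x ^ i) n]
      rw [Finset.prod_mul_distrib, Finset.prod_const, Finset.prod_pow_eq_pow_sum, Finset.card_range]
      rw [hg' x]
      have ha : u x ≠ 0 := hu0 x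
      rw [div_pow, one_pow, ← pow_mul, ← pow_mul]
      have h2S : (∑ i ∈ Finset.range n, i) * 2 = n * (n - 1) := Finset.sum_range_id_mul_two n
      have heq : 2 * (∑ i ∈ Finset.range n, i) = m * n := by
        rw [hm, Nat.mul_comm (n - 1) n, ← h2S]; ring
      rw [heq]
      rw [mul_one_div]
      exact div_self (pow_ne_zero _ ha)
    rw [hone, one_mul]
    rw [Fin.prod_univ_eq_prod_range (fun k => ((k).factorial : ℝ)) n]
  constructor
  · exact key
  · rw [Fintype.linearIndependent_iff]
    intro c hc
    have hy : ∀ k : Fin n, ContDiff ℝ ∞ (fun t => u t ^ m * g t ^ (k : ℕ)) :=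
      fun k => (hu'.pow m).mul (hgi.pow (k : ℕ))
    set M : Matrix (Fin n) (Fin n) ℝ := Matrix.of fun i k : Fin n =>
      iteratedDeriv (i : ℕ) (fun t => u t ^ m * g t ^ (k : ℕ)) 0 with hM
    have hdet : M.det ≠ 0 := by
      rw [key 0]
      exact Finset.prod_ne_zero_iff.mpr fun j _ =>
        Nat.cast_ne_zero.mpr (Nat.factorial_ne_zero j)
    have hzero : (fun t : ℝ => ∑ k : Fin n, c k * (u t ^ m * g t ^ (k : ℕ))) = fun _ => 0 := by
      funext t
      have := congrFun hc t
      simpa [Finset.sum_apply] using this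
    have hmv : M.mulVec c = 0 := by
      funext i
      have h1 : iteratedDeriv (i : ℕ)
          (fun t : ℝ => ∑ k : Fin n, c k * (u t ^ m * g t ^ (k : ℕ))) 0 = 0 := by
        rw [hzero]
        rw [iteratedDeriv_eq_iteratedFDeriv, iteratedFDeriv_zero_fun]; simp
      rw [iteratedDeriv_sum_mul _ c (i : ℕ) hy 0] at h1
      simp only [Matrix.mulVec, dotProduct, hM, Matrix.of_apply, Pi.zero_apply]
      calc ∑ k : Fin n, iteratedDeriv (i : ℕ) (fun t => u t ^ m * g t ^ (k : ℕ)) 0 * c k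
          = ∑ k : Fin n, c k * iteratedDeriv (i : ℕ) (fun t => u t ^ m * g t ^ (k : ℕ)) 0 :=
            Finset.sum_congr rfl fun k _ => mul_comm _ _
        _ = 0 := h1
    have := Matrix.eq_zero_of_mulVec_eq_zero hdet hmv
    exact fun k => congrFun this k
end

section
/- Let r, B : ℝ → ℝ be smooth with r(x) > 0 for all x, let g : ℝ → ℝ be smooth with g' = 1/r on ℝ, and let B₁ : ℝ → ℝ be smooth with B₁' = B/2 on ℝ. Then for j = 0 and j = 1, the function y_j(x) = √(r(x)) · g(x)^j · exp(−B₁(x)) satisfies y_j'' + B·y_j' + (1/4)·(4·𝒜(r) + B² + 2·B')·y_j = 0 on ℝ; that is, two linearly independent solutions of the standard-form equation y'' + B y' + ¼(4𝒜(r) + B² + 2B') y = 0 are given by √r · (∫ dx/r)^j · e^{−(1/2)∫B dx}. -/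
lemma key (r B B₁ u u' : ℝ → ℝ)
    (hr : ContDiff ℝ (⊤ : ℕ∞) r) (hrpos : ∀ x : ℝ, 0 < r x)
    (hB : ContDiff ℝ (⊤ : ℕ∞) B)
    (hB₁ : ContDiff ℝ (⊤ : ℕ∞) B₁) (hB₁' : ∀ x : ℝ, deriv B₁ x = B x / 2)
    (hu : ∀ t : ℝ, HasDerivAt u (u' t) t)
    (hu' : ∀ t : ℝ, HasDerivAt u' (-(deriv r t * u' t / r t)) t)
    (x : ℝ) :
    deriv (deriv (fun t => Real.sqrt (r t) * u t * Real.exp (-B₁ t))) x +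
      B x * deriv (fun t => Real.sqrt (r t) * u t * Real.exp (-B₁ t)) x +
      (1 / 4) * (4 * calA r x + B x ^ 2 + 2 * deriv B x) *
        (Real.sqrt (r x) * u x * Real.exp (-B₁ x)) = 0 := by
  have hrd : ∀ t : ℝ, HasDerivAt r (deriv r t) t :=
    fun t => (hr.differentiable (by simp) t).hasDerivAt
  have hr2 := (contDiff_infty_iff_deriv.mp (hr.of_le (by simp))).2
  have hr2d : ∀ t : ℝ, HasDerivAt (deriv r) (deriv (deriv r) t) t :=
    fun t => (hr2.differentiable (by simp) t).hasDerivAt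
  have hBd : ∀ t : ℝ, HasDerivAt B (deriv B t) t :=
    fun t => (hB.differentiable (by simp) t).hasDerivAt
  have hB₁d : ∀ t : ℝ, HasDerivAt B₁ (B t / 2) t := by
    intro t
    have := (hB₁.differentiable (by simp) t).hasDerivAt
    rwa [hB₁' t] at this
  have hsne : ∀ t : ℝ, Real.sqrt (r t) ≠ 0 :=
    fun t => (Real.sqrt_pos.mpr (hrpos t)).ne'
  have hs : ∀ t : ℝ, HasDerivAt (fun t => Real.sqrt (r t))
      (deriv r t / (2 * Real.sqrt (r t))) t :=
    fun t => (hrd t).sqrt (hrpos t).ne'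
  have hE : ∀ t : ℝ, HasDerivAt (fun t => Real.exp (-B₁ t))
      (Real.exp (-B₁ t) * -(B t / 2)) t := by
    intro t
    exact ((hB₁d t).neg).exp
  -- first derivative
  have hy : ∀ t : ℝ, HasDerivAt (fun t => Real.sqrt (r t) * u t * Real.exp (-B₁ t))
      ((deriv r t / (2 * Real.sqrt (r t)) * u t + Real.sqrt (r t) * u' t) *
          Real.exp (-B₁ t) +
        Real.sqrt (r t) * u t * (Real.exp (-B₁ t) * -(B t / 2))) t :=
    fun t => ((hs t).mul (hu t)).mul (hE t)
  have hdy : deriv (fun t => Real.sqrt (r t) * u t * Real.exp (-B₁ t)) =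
      fun t => (deriv r t / (2 * Real.sqrt (r t)) * u t + Real.sqrt (r t) * u' t) *
          Real.exp (-B₁ t) +
        Real.sqrt (r t) * u t * (Real.exp (-B₁ t) * -(B t / 2)) :=
    funext fun t => (hy t).deriv
  -- second derivative
  have h2s : (2 : ℝ) * Real.sqrt (r x) ≠ 0 := by
    simpa using hsne x
  have hsx := hs x
  have hEx := hE x
  have hmul2 : HasDerivAt (fun t => 2 * Real.sqrt (r t))
      (2 * (deriv r x / (2 * Real.sqrt (r x)))) x := (hs x).const_mul 2
  have hq : HasDerivAt (fun t => deriv r t / (2 * Real.sqrt (r t)))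
      ((deriv (deriv r) x * (2 * Real.sqrt (r x)) -
        deriv r x * (2 * (deriv r x / (2 * Real.sqrt (r x))))) /
        (2 * Real.sqrt (r x)) ^ 2) x := (hr2d x).div hmul2 h2s
  have hhalf : HasDerivAt (fun t => -(B t / 2)) (-(deriv B x / 2)) x :=
    ((hBd x).div_const 2).neg
  have hY := (((hq.mul (hu x)).add (hsx.mul (hu' x))).mul hEx).add
      (((hsx.mul (hu x)).mul (hEx.mul hhalf)))
  rw [hdy]
  erw [hY.deriv]
  simp only [Pi.mul_apply, Pi.add_apply]
  simp only [calA]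
  have hR : Real.sqrt (r x) ^ 2 = r x := Real.sq_sqrt (hrpos x).le
  have hE0 : Real.exp (-B₁ x) ≠ 0 := Real.exp_ne_zero _
  set s := Real.sqrt (r x) with hsdef
  have hs0 : s ≠ 0 := hsne x
  rw [← hR]
  field_simp
  ring

/-- Two solutions of the standard-form equation
y'' + B y' + ¼(4𝒜(r) + B² + 2B') y = 0 are y_j = √r·g^j·e^{−B₁},
where g' = 1/r and B₁' = B/2. -/
theorem standard_form_solutions (r B B₁ g : ℝ → ℝ)
    (hr : ContDiff ℝ (⊤ : ℕ∞) r) (hrpos : ∀ x : ℝ, 0 < r x)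
    (hB : ContDiff ℝ (⊤ : ℕ∞) B)
    (hg : ContDiff ℝ (⊤ : ℕ∞) g) (hg' : ∀ x : ℝ, deriv g x = 1 / r x)
    (hB₁ : ContDiff ℝ (⊤ : ℕ∞) B₁) (hB₁' : ∀ x : ℝ, deriv B₁ x = B x / 2)
    (j : ℕ) (hj : j ≤ 1) (x : ℝ) :
    deriv (deriv (fun t => Real.sqrt (r t) * g t ^ j * Real.exp (-B₁ t))) x +
      B x * deriv (fun t => Real.sqrt (r t) * g t ^ j * Real.exp (-B₁ t)) x +
      (1 / 4) * (4 * calA r x + B x ^ 2 + 2 * deriv B x) *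
        (Real.sqrt (r x) * g x ^ j * Real.exp (-B₁ x)) = 0 := by
  have hgd : ∀ t : ℝ, HasDerivAt g (1 / r t) t := by
    intro t
    have := (hg.differentiable (by simp) t).hasDerivAt
    rwa [hg' t] at this
  interval_cases j
  · exact key r B B₁ (fun t => g t ^ 0) (fun _ => 0) hr hrpos hB hB₁ hB₁'
      (fun t => by simpa using hasDerivAt_const t (1 : ℝ))
      (fun t => by simpa using hasDerivAt_const t (0 : ℝ)) x
  · refine key r B B₁ (fun t => g t ^ 1) (fun t => 1 / r t) hr hrpos hB hB₁ hB₁'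
      (fun t => by simpa using hgd t) (fun t => ?_) x
    have hrd : HasDerivAt r (deriv r t) t := (hr.differentiable (by simp) t).hasDerivAt
    have h : HasDerivAt (fun t => 1 / r t) _ t := (hasDerivAt_const t (1 : ℝ)).div hrd (hrpos t).ne'
    convert h using 1
    beta_reduce
    have hrt : r t ≠ 0 := (hrpos t).ne'
    field_simp
    ring
end
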